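/- Let H be a real Hilbert space and let K_l ⊆ K_{l−1} ⊆ ⋯ ⊆ K₀ be a chain of closed subspaces of H, with q_i the orthogonal projection of H onto K_i. Let τ₀, …, τ_l be nonnegative real numbers and set t_i := τ₀ + ⋯ + τ_i for 0 ≤ i ≤ l (with the convention t_{−1} = 0). For every real t > 0, the bounded operator Φ_t := t·id_H + Σ_{i=0}^{l} τ_i q_i is bijective, and its inverse is given by Φ_t^{−1} = (1/t)·id_H − Σ_{i=0}^{l} ( τ_i / ((t + t_i)(t + t_i − τ_i)) ) q_i. -/

import Mathlib

/-!
Since the `K i` are nested, the projections multiply as `q i * q j = q (max i j)`. In the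
algebra they span, `(x + ∑ aᵢ qᵢ) (y + ∑ bᵢ qᵢ) = x y + ∑ₖ (Xₖ Yₖ - X'ₖ Y'ₖ) qₖ`, where `Xₖ`, `X'ₖ`
are `x` plus the partial sums of `a` over `i ≤ k`, resp. `i < k` (and likewise `Yₖ`, `Y'ₖ`).
For `Φ` these are `t + tₖ` and `t + tₖ - τₖ`, and the coefficients of `Ψ` telescope,
`τₖ / ((t + tₖ)(t + tₖ - τₖ)) = 1 / (t + tₖ - τₖ) - 1 / (t + tₖ)`, so that the corresponding
partial sums for `Ψ` are their reciprocals. Hence all coefficients of `Φ Ψ` and `Ψ Φ` vanish.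
-/

open Finset

section Telescope

variable {ι M : Type*} [LinearOrder ι] [LocallyFiniteOrderBot ι]

theorem Finset.sum_Iic_eq_add_sum_Iio [AddCommMonoid M] (f : ι → M) (k : ι) :
    ∑ i ∈ Iic k, f i = f k + ∑ i ∈ Iio k, f i := by
  rw [Iic_eq_cons_Iio, sum_cons]

theorem Finset.Iio_eq_Iic_max' {k : ι} (h : (Iio k).Nonempty) : Iio k = Iic ((Iio k).max' h) := by
  ext j
  simp only [mem_Iio, mem_Iic]
  exact ⟨fun hj => le_max' _ _ (mem_Iio.2 hj),
    fun hj => hj.trans_lt (mem_Iio.1 (max'_mem _ h))⟩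

theorem Finset.sum_Iic_sub_telescope [AddCommGroup M] [WellFoundedLT ι] (f : Finset ι → M)
    (k : ι) :
    ∑ i ∈ Iic k, (f (Iio i) - f (Iic i)) = f ∅ - f (Iic k) := by
  induction k using WellFoundedLT.induction with
  | _ k ih =>
    rw [Iic_eq_cons_Iio, sum_cons, ← Iic_eq_cons_Iio]
    rcases (Iio k).eq_empty_or_nonempty with h | h
    · rw [h, sum_empty, add_zero]
    · rw [Iio_eq_Iic_max' h, ih _ (mem_Iio.1 (max'_mem _ h))]
      abel

end Telescope

section ChainAlgebra

variable {ι R A : Type*} [Fintype ι] [LinearOrder ι] [LocallyFiniteOrderBot ι]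
  [CommRing R] [Ring A] [Algebra R A] {e : ι → A}

theorem sum_smul_mul_sum_smul_of_mul_eq_max (he : ∀ i j, e i * e j = e (max i j))
    (a b : ι → R) :
    (∑ i, a i • e i) * (∑ j, b j • e j) =
      ∑ k, (a k * ∑ j ∈ Iic k, b j + (∑ i ∈ Iio k, a i) * b k) • e k := by
  have hsplit : ∀ i j, (a i * b j) • e (max i j) =
      (if j ≤ i then (a i * b j) • e i else 0) + (if i < j then (a i * b j) • e j else 0) := by
    intro i j
    rcases le_or_gt j i with h | h
    · simp [h, h.not_gt]
    · simp [h, h.not_ge, h.le]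
  calc (∑ i, a i • e i) * (∑ j, b j • e j)
      = ∑ i, ∑ j, (a i * b j) • e (max i j) := by
        simp only [sum_mul_sum, smul_mul_smul_comm, he]
    _ = ∑ i, ∑ j ∈ Iic i, (a i * b j) • e i + ∑ j, ∑ i ∈ Iio j, (a i * b j) • e j := by
        simp only [hsplit, sum_add_distrib]
        rw [sum_comm (f := fun i j => if i < j then (a i * b j) • e j else 0)]
        simp only [← sum_filter, filter_ge_eq_Iic, filter_gt_eq_Iio]
    _ = _ := by
        simp only [← sum_smul, ← mul_sum, ← sum_mul, add_smul, sum_add_distrib]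

theorem smul_one_add_sum_mul_smul_one_add_sum (he : ∀ i j, e i * e j = e (max i j))
    (x y : R) (a b : ι → R) :
    (x • 1 + ∑ i, a i • e i) * (y • 1 + ∑ i, b i • e i) =
      (x * y) • 1 + ∑ k, ((x + ∑ i ∈ Iic k, a i) * (y + ∑ i ∈ Iic k, b i)
        - (x + ∑ i ∈ Iio k, a i) * (y + ∑ i ∈ Iio k, b i)) • e k := by
  rw [add_mul, mul_add, mul_add, sum_smul_mul_sum_smul_of_mul_eq_max he, mul_sum, sum_mul]
  simp only [smul_mul_smul_comm, one_mul, mul_one, add_assoc, ← sum_add_distrib, ← add_smul]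
  refine congrArg _ (sum_congr rfl fun k _ => congrArg (· • e k) ?_)
  rw [sum_Iic_eq_add_sum_Iio a, sum_Iic_eq_add_sum_Iio b]
  ring

end ChainAlgebra

section ChainInverse

variable {ι A : Type*} [Fintype ι] [LinearOrder ι] [LocallyFiniteOrderBot ι]
  [Ring A] [Algebra ℝ A] {e : ι → A}

theorem smul_one_add_sum_smul_explicit_inverse (he : ∀ i j, e i * e j = e (max i j))
    {τ : ι → ℝ} (hτ : ∀ i, 0 ≤ τ i) {t : ℝ} (ht : 0 < t) :
    let Φ := t • (1 : A) + ∑ i, τ i • e i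
    let Ψ := (1 / t) • (1 : A) - ∑ i, (τ i / ((t + ∑ j ∈ Iic i, τ j) *
      (t + ∑ j ∈ Iic i, τ j - τ i))) • e i
    Φ * Ψ = 1 ∧ Ψ * Φ = 1 := by
  intro Φ Ψ
  set c : ι → ℝ := fun i => τ i / ((t + ∑ j ∈ Iic i, τ j) * (t + ∑ j ∈ Iic i, τ j - τ i))
  have hpos : ∀ s : Finset ι, 0 < t + ∑ j ∈ s, τ j := fun s =>
    add_pos_of_pos_of_nonneg ht (sum_nonneg fun j _ => hτ j)
  have hc : ∀ i, c i = 1 / (t + ∑ j ∈ Iio i, τ j) - 1 / (t + ∑ j ∈ Iic i, τ j) := by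
    intro i
    have h1 := (hpos (Iio i)).ne'
    have h2 := (hpos (Iic i)).ne'
    simp only [c]
    rw [sum_Iic_eq_add_sum_Iio τ i, add_left_comm, add_sub_cancel_left] at *
    field_simp
    ring
  have hIicc : ∀ k, 1 / t - ∑ i ∈ Iic k, c i = 1 / (t + ∑ j ∈ Iic k, τ j) := by
    intro k
    simp only [hc, sum_Iic_sub_telescope (fun s => 1 / (t + ∑ j ∈ s, τ j)), sum_empty, add_zero]
    ring
  have hIioc : ∀ k, 1 / t - ∑ i ∈ Iio k, c i = 1 / (t + ∑ j ∈ Iio k, τ j) := by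
    intro k
    have := hIicc k
    rw [sum_Iic_eq_add_sum_Iio c, hc] at this
    linarith
  have hΨ : Ψ = (1 / t) • 1 + ∑ i, (-c i) • e i := by
    simp only [Ψ, neg_smul, sum_neg_distrib]
    exact sub_eq_add_neg _ _
  refine ⟨?_, ?_⟩ <;> rw [hΨ, smul_one_add_sum_mul_smul_one_add_sum he] <;>
    simp only [sum_neg_distrib, ← sub_eq_add_neg, hIicc, hIioc, mul_one_div_cancel ht.ne',
      one_div_mul_cancel ht.ne', mul_one_div_cancel (hpos _).ne',
      one_div_mul_cancel (hpos _).ne', sub_self, zero_smul, sum_const_zero, one_smul, add_zero]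

end ChainInverse

namespace Submodule

variable {𝕜 E : Type*} [RCLike 𝕜] [NormedAddCommGroup E] [InnerProductSpace 𝕜 E]

theorem starProjection_comp_starProjection_of_ge {U V : Submodule 𝕜 E}
    [U.HasOrthogonalProjection] [V.HasOrthogonalProjection] (h : U ≤ V) :
    V.starProjection ∘L U.starProjection = U.starProjection :=
  ContinuousLinearMap.ext fun x =>
    V.starProjection_eq_self_iff.mpr (h (U.starProjection_apply_mem x))

theorem starProjection_mul_starProjection_of_antitone {ι : Type*} [LinearOrder ι]
    {K : ι → Submodule 𝕜 E} [∀ i, (K i).HasOrthogonalProjection] (hK : Antitone K) (i j : ι) :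
    (K i).starProjection * (K j).starProjection = (K (max i j)).starProjection := by
  rcases le_total i j with h | h
  · rw [max_eq_right h]
    exact starProjection_comp_starProjection_of_ge (hK h)
  · rw [max_eq_left h]
    exact starProjection_comp_starProjection_of_le (hK h)

end Submodule

open ContinuousLinearMap in
theorem stmt6_general {H : Type*} [NormedAddCommGroup H] [InnerProductSpace ℝ H]
    (l : ℕ) (K : Fin (l + 1) → Submodule ℝ H)
    [∀ i, CompleteSpace (K i)]
    (hanti : ∀ i j : Fin (l + 1), i ≤ j → K j ≤ K i)
    (τ : Fin (l + 1) → ℝ) (hτ : ∀ i, 0 ≤ τ i) (t : ℝ) (ht : 0 < t)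
    (q : Fin (l + 1) → (H →L[ℝ] H))
    (hq : ∀ i, q i = (K i).subtypeL ∘L (Submodule.orthogonalProjectionOnto (K i) : H →L[ℝ] K i))
    (tt : Fin (l + 1) → ℝ) (htt : ∀ i, tt i = ∑ j ∈ Finset.Iic i, τ j)
    (Φ Ψ : H →L[ℝ] H)
    (hΦ : Φ = t • (ContinuousLinearMap.id ℝ H) + ∑ i, τ i • q i)
    (hΨ : Ψ = (1 / t) • (ContinuousLinearMap.id ℝ H)
        - ∑ i, (τ i / ((t + tt i) * (t + tt i - τ i))) • q i) :
    Function.Bijective Φ ∧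
    Φ ∘L Ψ = ContinuousLinearMap.id ℝ H ∧
    Ψ ∘L Φ = ContinuousLinearMap.id ℝ H := by
  obtain rfl : q = fun i => (K i).starProjection := funext hq
  obtain ⟨hΦΨ, hΨΦ⟩ : Φ * Ψ = 1 ∧ Ψ * Φ = 1 := by
    rw [hΦ, hΨ, ← one_def]
    simpa only [htt] using smul_one_add_sum_smul_explicit_inverse
      (Submodule.starProjection_mul_starProjection_of_antitone hanti) hτ ht
  rw [← one_def, ← ContinuousLinearMap.mul_def, ← ContinuousLinearMap.mul_def]
  exact ⟨Function.bijective_iff_has_inverse.2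
    ⟨Ψ, fun x => DFunLike.congr_fun hΨΦ x, fun x => DFunLike.congr_fun hΦΨ x⟩, hΦΨ, hΨΦ⟩

open ContinuousLinearMap in
/-- For a nested chain of closed subspaces `K l ≤ ⋯ ≤ K 0` of a real Hilbert space,
nonnegative scalars `τ i` with partial sums `t i`, and `t > 0`, the operator
`Φ = t • id + ∑ τ i • q i` is bijective with the explicit inverse
`(1/t) • id - ∑ (τ i / ((t + t i)(t + t i - τ i))) • q i`. -/
theorem stmt6 {H : Type*} [NormedAddCommGroup H] [InnerProductSpace ℝ H]
    [CompleteSpace H] (l : ℕ) (K : Fin (l + 1) → Submodule ℝ H)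
    [∀ i, CompleteSpace (K i)]
    (hanti : ∀ i j : Fin (l + 1), i ≤ j → K j ≤ K i)
    (τ : Fin (l + 1) → ℝ) (hτ : ∀ i, 0 ≤ τ i) (t : ℝ) (ht : 0 < t)
    (q : Fin (l + 1) → (H →L[ℝ] H))
    (hq : ∀ i, q i = (K i).subtypeL ∘L (Submodule.orthogonalProjectionOnto (K i) : H →L[ℝ] K i))
    (tt : Fin (l + 1) → ℝ) (htt : ∀ i, tt i = ∑ j ∈ Finset.Iic i, τ j)
    (Φ Ψ : H →L[ℝ] H)
    (hΦ : Φ = t • (ContinuousLinearMap.id ℝ H) + ∑ i, τ i • q i)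
    (hΨ : Ψ = (1 / t) • (ContinuousLinearMap.id ℝ H)
        - ∑ i, (τ i / ((t + tt i) * (t + tt i - τ i))) • q i) :
    Function.Bijective Φ ∧
    Φ ∘L Ψ = ContinuousLinearMap.id ℝ H ∧
    Ψ ∘L Φ = ContinuousLinearMap.id ℝ H :=
  stmt6_general l K hanti τ hτ t ht q hq tt htt Φ Ψ hΦ hΨ
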